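/- Let a, b : ℕ → ℕ satisfy a(0) = 1, b(0) = 0, and for all n ≥ 1, a(n) = n − b(a(n−1)) and b(n) = n − a(b(n−1)). Let γ = (√5−1)/2. Then for all n ≥ 1: a(n) = ⌊(n+1)γ⌋ unless n = F_{2k} − 1 for some k ≥ 2, in which case a(F_{2k} − 1) = ⌊F_{2k}·γ⌋ + 1; and b(n) = ⌊(n+1)γ⌋ unless n = F_{2k+1} − 1 for some k ≥ 1, in which case b(F_{2k+1} − 1) = ⌊F_{2k+1}·γ⌋ − 1. -/

import Mathlib

/-!
Let `G n = ⌊n / φ⌋` (`goldenFloor`), so that `⌊(n + 1) γ⌋ = G (n + 1)`. By strong induction,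
`a n = G (n + 1) + [n + 1 = F_{2k}]` and `b n = G (n + 1) - [n + 1 = F_{2k+1}]` (`k ≥ 1`) for
every `n`. Since `φ⁻¹ ^ 2 = 1 - φ⁻¹` and `φ` is irrational, `G` satisfies Hofstadter's identity
`G (n + 1) + G (G n + 1) = n`, so the recursions for `a` and `b` reproduce `G (· + 1)` up to the
correction term at the inner argument `G n`. That term is passed on correctly because `G n + 1` is
an even-indexed Fibonacci number iff `n + 1` is an odd-indexed one, and (unless `n` is an
even-indexed one) `G n + 1` is odd-indexed iff `n + 1` is even-indexed. These facts, and the steps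
where `n` itself is a Fibonacci number, come from `F_{m+1} / φ = F_m - ψ ^ (m + 1)`: the error
term is tiny and its sign alternates with the parity of `m`.
-/

open Real goldenRatio
open Nat (fib)

lemma inv_goldenRatio_sq : φ⁻¹ ^ 2 = 1 - φ⁻¹ := by
  rw [inv_goldenRatio]; linear_combination goldenConj_sq

lemma one_half_lt_inv_goldenRatio : 1 / 2 < φ⁻¹ := by
  have h5 : (2 : ℝ) < √5 := (Real.lt_sqrt (by norm_num)).2 (by norm_num)
  rw [inv_goldenRatio]; unfold goldenConj; linarith

lemma inv_goldenRatio_lt_two_thirds : φ⁻¹ < 2 / 3 := by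
  have h5 : √5 < 7 / 3 := (Real.sqrt_lt' (by norm_num)).2 (by norm_num)
  rw [inv_goldenRatio]; unfold goldenConj; linarith

lemma inv_goldenRatio_pow_le {m n : ℕ} (h : m ≤ n) : φ⁻¹ ^ n ≤ φ⁻¹ ^ m :=
  pow_le_pow_of_le_one (inv_pos.2 goldenRatio_pos).le
    (inv_le_one_of_one_le₀ one_lt_goldenRatio.le) h

lemma fib_succ_mul_inv_goldenRatio_of_even {m : ℕ} (hm : Even m) :
    (fib (m + 1) : ℝ) * φ⁻¹ = fib m + φ⁻¹ ^ (m + 1) := by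
  have h := goldenConj_mul_fib_succ_add_fib m
  rw [← neg_neg ψ, ← inv_goldenRatio, Odd.neg_pow hm.add_one] at h
  linarith

lemma fib_succ_mul_inv_goldenRatio_of_odd {m : ℕ} (hm : Odd m) :
    (fib (m + 1) : ℝ) * φ⁻¹ = fib m - φ⁻¹ ^ (m + 1) := by
  have h := goldenConj_mul_fib_succ_add_fib m
  rw [← neg_neg ψ, ← inv_goldenRatio, Even.neg_pow hm.add_one] at h
  linarith

noncomputable def goldenFloor (n : ℕ) : ℕ := ⌊(n : ℝ) * φ⁻¹⌋₊

lemma goldenFloor_eq_iff {n c : ℕ} :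
    goldenFloor n = c ↔ (c : ℝ) ≤ n * φ⁻¹ ∧ n * φ⁻¹ < c + 1 :=
  Nat.floor_eq_iff (by positivity)

lemma goldenFloor_mono : Monotone goldenFloor := fun _ _ h =>
  Nat.floor_mono (mul_le_mul_of_nonneg_right (by exact_mod_cast h) (by positivity))

lemma goldenFloor_lt_goldenFloor_add_two (n : ℕ) : goldenFloor n < goldenFloor (n + 2) := by
  have hle : (goldenFloor n : ℝ) ≤ n * φ⁻¹ := Nat.floor_le (by positivity)
  have := one_half_lt_inv_goldenRatio
  refine Nat.lt_iff_add_one_le.2 (Nat.le_floor ?_)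
  push_cast
  linarith

lemma le_add_one_of_goldenFloor_eq {m n : ℕ} (h : goldenFloor m = goldenFloor n) :
    m ≤ n + 1 := by
  by_contra! hmn
  have := goldenFloor_mono (show n + 2 ≤ m by omega)
  have := goldenFloor_lt_goldenFloor_add_two n
  omega

lemma one_le_goldenFloor {n : ℕ} (hn : 2 ≤ n) : 1 ≤ goldenFloor n := by
  have h0 : goldenFloor 0 = 0 := by simp [goldenFloor]
  have : goldenFloor 0 < goldenFloor 2 := goldenFloor_lt_goldenFloor_add_two 0
  have := goldenFloor_mono hn
  omega

lemma goldenFloor_lt_self {n : ℕ} (hn : 1 ≤ n) : goldenFloor n < n := by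
  have := inv_goldenRatio_lt_two_thirds
  have : (1 : ℝ) ≤ n := by exact_mod_cast hn
  exact (Nat.floor_lt (by positivity)).2 (by nlinarith)

lemma goldenFloor_add_goldenFloor_goldenFloor_add_one (n : ℕ) :
    goldenFloor (n + 1) + goldenFloor (goldenFloor n + 1) = n := by
  set K := goldenFloor n
  have hlo : (K : ℝ) ≤ n * φ⁻¹ := Nat.floor_le (by positivity)
  have hhi : (n : ℝ) * φ⁻¹ < K + 1 := Nat.lt_floor_add_one _
  have hγ₁ := one_half_lt_inv_goldenRatio
  have hγ₂ := inv_goldenRatio_lt_two_thirds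
  -- with `θ = n φ⁻¹ - K` the fractional part of `n / φ`,
  -- both floors are decided by whether `θ < 1 - φ⁻¹`
  have hK : (K + 1 : ℝ) * φ⁻¹ = n - K + φ⁻¹ - (n * φ⁻¹ - K) * (1 + φ⁻¹) := by
    linear_combination (n : ℝ) * inv_goldenRatio_sq
  have hne : ((n + 1 : ℕ) : ℝ) * φ⁻¹ ≠ ((K + 1 : ℕ) : ℝ) :=
    (goldenRatio_irrational.inv.natCast_mul n.succ_ne_zero).ne_nat _
  push_cast at hne
  have hφ : (0 : ℝ) < 1 + φ⁻¹ := by linarith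
  rcases lt_or_gt_of_ne hne with hlt | hgt
  · have hθ := mul_lt_mul_of_pos_right
      (show (n : ℝ) * φ⁻¹ - K < 1 - φ⁻¹ by linarith) hφ
    have h1 : goldenFloor (n + 1) = K := by
      rw [goldenFloor_eq_iff]; push_cast; constructor <;> linarith
    have hKn : K ≤ n := by exact_mod_cast (show (K : ℝ) ≤ n by nlinarith)
    have h2 : goldenFloor (K + 1) = n - K := by
      rw [goldenFloor_eq_iff, Nat.cast_sub hKn]
      push_cast; constructor <;> nlinarith [inv_goldenRatio_sq]
    omega
  · have hθ := mul_lt_mul_of_pos_right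
      (show 1 - φ⁻¹ < (n : ℝ) * φ⁻¹ - K by linarith) hφ
    have hθ' := mul_le_mul_of_nonneg_right
      (show (n : ℝ) * φ⁻¹ - K ≤ 1 by linarith) hφ.le
    have h1 : goldenFloor (n + 1) = K + 1 := by
      rw [goldenFloor_eq_iff]; push_cast; constructor <;> linarith
    have hKn : K < n := by
      have : (0 : ℝ) < (n + 1) * (1 - φ⁻¹) := mul_pos (by positivity) (by linarith)
      exact_mod_cast (show (K : ℝ) < n by linarith)
    have h2 : goldenFloor (K + 1) = n - (K + 1) := by
      rw [goldenFloor_eq_iff, Nat.cast_sub hKn]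
      push_cast; constructor <;> nlinarith [inv_goldenRatio_sq]
    omega

lemma goldenFloor_fib_succ_of_even {m : ℕ} (hm : Even m) :
    goldenFloor (fib (m + 1)) = fib m := by
  have hpow := inv_goldenRatio_pow_le (show 1 ≤ m + 1 by omega)
  have hpow_pos : 0 < φ⁻¹ ^ (m + 1) := by positivity
  rw [goldenFloor_eq_iff, fib_succ_mul_inv_goldenRatio_of_even hm]
  constructor <;> linarith [inv_goldenRatio_lt_two_thirds]

lemma goldenFloor_fib_succ_of_odd {m : ℕ} (hm : Odd m) :
    goldenFloor (fib (m + 1)) + 1 = fib m := by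
  have hpow := inv_goldenRatio_pow_le (show 1 ≤ m + 1 by omega)
  have hpow_pos : 0 < φ⁻¹ ^ (m + 1) := by positivity
  have hfib : 1 ≤ fib m := Nat.fib_pos.2 hm.pos
  suffices goldenFloor (fib (m + 1)) = fib m - 1 by omega
  rw [goldenFloor_eq_iff, fib_succ_mul_inv_goldenRatio_of_odd hm, Nat.cast_sub hfib]
  push_cast
  constructor <;> linarith [inv_goldenRatio_lt_two_thirds]

lemma goldenFloor_fib_succ_add_one_of_even {m : ℕ} (hm : Even m) (h2 : 2 ≤ m) :
    goldenFloor (fib (m + 1) + 1) = fib m := by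
  have hpow := inv_goldenRatio_pow_le (show 3 ≤ m + 1 by omega)
  have hpow_pos : 0 < φ⁻¹ ^ (m + 1) := by positivity
  have hpow3 : φ⁻¹ ^ 3 = 2 * φ⁻¹ - 1 := by
    linear_combination (φ⁻¹ - 1) * inv_goldenRatio_sq
  rw [goldenFloor_eq_iff]
  push_cast
  rw [add_mul, fib_succ_mul_inv_goldenRatio_of_even hm]
  constructor <;> linarith [one_half_lt_inv_goldenRatio, inv_goldenRatio_lt_two_thirds]

lemma goldenFloor_fib_succ_add_one_of_odd {m : ℕ} (hm : Odd m) :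
    goldenFloor (fib (m + 1) + 1) = fib m := by
  have hpow := inv_goldenRatio_pow_le (show 2 ≤ m + 1 by have := hm.pos; omega)
  have hpow_pos : 0 < φ⁻¹ ^ (m + 1) := by positivity
  rw [goldenFloor_eq_iff]
  push_cast
  rw [add_mul, fib_succ_mul_inv_goldenRatio_of_odd hm]
  constructor <;> linarith [inv_goldenRatio_sq, one_half_lt_inv_goldenRatio,
    inv_goldenRatio_lt_two_thirds]

lemma goldenFloor_fib_succ_sub_one_of_even {m : ℕ} (hm : Even m) (h2 : 2 ≤ m) :
    goldenFloor (fib (m + 1) - 1) + 1 = fib m := by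
  have hpow := inv_goldenRatio_pow_le (show 2 ≤ m + 1 by omega)
  have hpow_pos : 0 < φ⁻¹ ^ (m + 1) := by positivity
  have hfib : 1 ≤ fib m := Nat.fib_pos.2 (by omega)
  have hfib' : 1 ≤ fib (m + 1) := Nat.fib_pos.2 (by omega)
  suffices goldenFloor (fib (m + 1) - 1) = fib m - 1 by omega
  rw [goldenFloor_eq_iff, Nat.cast_sub hfib, Nat.cast_sub hfib']
  push_cast
  rw [sub_mul, fib_succ_mul_inv_goldenRatio_of_even hm]
  constructor <;> linarith [inv_goldenRatio_sq, one_half_lt_inv_goldenRatio,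
    inv_goldenRatio_lt_two_thirds]

lemma goldenFloor_fib_succ_sub_one_of_odd {m : ℕ} (hm : Odd m) :
    goldenFloor (fib (m + 1) - 1) + 1 = fib m := by
  have hpow := inv_goldenRatio_pow_le (show 2 ≤ m + 1 by have := hm.pos; omega)
  have hpow_pos : 0 < φ⁻¹ ^ (m + 1) := by positivity
  have hfib : 1 ≤ fib m := Nat.fib_pos.2 hm.pos
  have hfib' : 1 ≤ fib (m + 1) := Nat.fib_pos.2 (by omega)
  suffices goldenFloor (fib (m + 1) - 1) = fib m - 1 by omega
  rw [goldenFloor_eq_iff, Nat.cast_sub hfib, Nat.cast_sub hfib']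
  push_cast
  rw [sub_mul, fib_succ_mul_inv_goldenRatio_of_odd hm]
  constructor <;> linarith [inv_goldenRatio_sq, one_half_lt_inv_goldenRatio,
    inv_goldenRatio_lt_two_thirds]

lemma goldenFloor_fib_succ_sub_two_of_even {m : ℕ} (hm : Even m) (h4 : 4 ≤ m) :
    goldenFloor (fib (m + 1) - 2) + 2 = fib m := by
  have hpow := inv_goldenRatio_pow_le (show 5 ≤ m + 1 by omega)
  have hpow_pos : 0 < φ⁻¹ ^ (m + 1) := by positivity
  have hpow5 : φ⁻¹ ^ 5 = 5 * φ⁻¹ - 3 := by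
    linear_combination (φ⁻¹ ^ 3 - φ⁻¹ ^ 2 + 2 * φ⁻¹ - 3) * inv_goldenRatio_sq
  have hfib : 2 ≤ fib m := le_trans (by decide) (Nat.fib_mono (show 3 ≤ m by omega))
  have hfib' : 2 ≤ fib (m + 1) :=
    le_trans (by decide) (Nat.fib_mono (show 3 ≤ m + 1 by omega))
  suffices goldenFloor (fib (m + 1) - 2) = fib m - 2 by omega
  rw [goldenFloor_eq_iff, Nat.cast_sub hfib, Nat.cast_sub hfib']
  push_cast
  rw [sub_mul, fib_succ_mul_inv_goldenRatio_of_even hm]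
  constructor <;> linarith [inv_goldenRatio_lt_two_thirds]

lemma fib_add_one_ne_fib {m i : ℕ} (hm : 2 ≤ m) (hi : i % 2 = m % 2) : fib m + 1 ≠ fib i := by
  intro h
  have hlt : fib m < fib i := by omega
  have hgt : fib i < fib (m + 2) := by
    have : 2 ≤ fib (m + 1) := le_trans (by decide) (Nat.fib_mono (show 3 ≤ m + 1 by omega))
    rw [Nat.fib_add_two]; omega
  have h1 : m < i := Nat.fib_mono.reflect_lt hlt
  have h2 : i < m + 2 := Nat.fib_mono.reflect_lt hgt
  omega

def evenIndexFibs : Set ℕ := {n | ∃ k, n = fib (2 * k + 2)}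

def oddIndexFibs : Set ℕ := {n | ∃ k, n = fib (2 * k + 3)}

lemma fib_mem_evenIndexFibs (k : ℕ) : fib (2 * k + 2) ∈ evenIndexFibs := ⟨k, rfl⟩

lemma fib_mem_oddIndexFibs (k : ℕ) : fib (2 * k + 3) ∈ oddIndexFibs := ⟨k, rfl⟩

lemma fib_add_one_notMem_evenIndexFibs {m : ℕ} (hm : 2 ≤ m) (hpar : m % 2 = 0) :
    fib m + 1 ∉ evenIndexFibs := by
  rintro ⟨k, hk⟩
  exact fib_add_one_ne_fib hm (by omega) hk

lemma fib_add_one_notMem_oddIndexFibs {m : ℕ} (hm : 2 ≤ m) (hpar : m % 2 = 1) :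
    fib m + 1 ∉ oddIndexFibs := by
  rintro ⟨k, hk⟩
  exact fib_add_one_ne_fib hm (by omega) hk

lemma goldenFloor_add_one_mem_oddIndexFibs_iff {n : ℕ} (hn : 1 ≤ n)
    (hE : n ∉ evenIndexFibs) :
    goldenFloor n + 1 ∈ oddIndexFibs ↔ n + 1 ∈ evenIndexFibs := by
  constructor
  · rintro ⟨k, hk⟩
    have hodd : Odd (2 * k + 3) := ⟨k + 1, by ring⟩
    have h1 : goldenFloor (fib (2 * k + 4)) + 1 = fib (2 * k + 3) :=
      goldenFloor_fib_succ_of_odd hodd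
    have h2 : goldenFloor (fib (2 * k + 4) - 1) + 1 = fib (2 * k + 3) :=
      goldenFloor_fib_succ_sub_one_of_odd hodd
    have hpos : 1 ≤ fib (2 * k + 4) := Nat.fib_pos.2 (by omega)
    have hle := le_add_one_of_goldenFloor_eq
      (show goldenFloor n = goldenFloor (fib (2 * k + 4) - 1) by omega)
    have hge := le_add_one_of_goldenFloor_eq
      (show goldenFloor (fib (2 * k + 4)) = goldenFloor n by omega)
    have hne : n ≠ fib (2 * k + 4) := fun h => hE ⟨k + 1, h⟩
    exact ⟨k + 1, show n + 1 = fib (2 * k + 4) by omega⟩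
  · rintro ⟨k, hk⟩
    obtain _ | j := k
    · simp at hk; omega
    replace hk : n + 1 = fib (2 * j + 4) := hk
    have h : goldenFloor (fib (2 * j + 4) - 1) + 1 = fib (2 * j + 3) :=
      goldenFloor_fib_succ_sub_one_of_odd ⟨j + 1, by ring⟩
    exact ⟨j, by rw [show n = fib (2 * j + 4) - 1 by omega]; exact h⟩

lemma goldenFloor_add_one_mem_evenIndexFibs_iff {n : ℕ} (hn : 1 ≤ n) :
    goldenFloor n + 1 ∈ evenIndexFibs ↔ n + 1 ∈ oddIndexFibs := by
  constructor
  · rintro ⟨k, hk⟩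
    obtain _ | j := k
    · have hn1 : n = 1 := by
        by_contra
        have := one_le_goldenFloor (show 2 ≤ n by omega)
        simp at hk
        omega
      exact ⟨0, by subst hn1; norm_num⟩
    replace hk : goldenFloor n + 1 = fib (2 * j + 4) := hk
    have heven : Even (2 * j + 4) := ⟨j + 2, by ring⟩
    have h1 : goldenFloor (fib (2 * j + 5)) = fib (2 * j + 4) :=
      goldenFloor_fib_succ_of_even heven
    have h2 : goldenFloor (fib (2 * j + 5) - 2) + 2 = fib (2 * j + 4) :=
      goldenFloor_fib_succ_sub_two_of_even heven (by omega)
    have hlo := goldenFloor_mono.reflect_lt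
      (show goldenFloor (fib (2 * j + 5) - 2) < goldenFloor n by omega)
    have hhi := goldenFloor_mono.reflect_lt
      (show goldenFloor n < goldenFloor (fib (2 * j + 5)) by omega)
    exact ⟨j + 1, show n + 1 = fib (2 * j + 5) by omega⟩
  · rintro ⟨k, hk⟩
    have h : goldenFloor (fib (2 * k + 3) - 1) + 1 = fib (2 * k + 2) :=
      goldenFloor_fib_succ_sub_one_of_even ⟨k + 1, by ring⟩ (by omega)
    exact ⟨k, by rw [show n = fib (2 * k + 3) - 1 by omega]; exact h⟩

-- `b`'s correction sits on the left to avoid truncated subtraction.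
def StollFormula (a b : ℕ → ℕ) (n : ℕ) : Prop :=
  a n = goldenFloor (n + 1) + evenIndexFibs.indicator 1 (n + 1) ∧
    b n + oddIndexFibs.indicator 1 (n + 1) = goldenFloor (n + 1)

section Married

variable {a b : ℕ → ℕ}

lemma b_add_indicator_eq_goldenFloor (hb : ∀ n, 1 ≤ n → b n = n - a (b (n - 1))) {n : ℕ}
    (hn : 1 ≤ n) (ih : ∀ m < n, StollFormula a b m) :
    b n + oddIndexFibs.indicator 1 (n + 1) = goldenFloor (n + 1) := by
  have hrec := hb n hn
  obtain ⟨-, hprev⟩ := ih (n - 1) (by omega)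
  rw [Nat.sub_add_cancel hn] at hprev
  by_cases hO : n ∈ oddIndexFibs
  · obtain ⟨k, rfl⟩ := hO
    have heven : Even (2 * k + 2) := ⟨k + 1, by ring⟩
    have hfib : fib (2 * k + 3) = fib (2 * k + 1) + fib (2 * k + 2) := Nat.fib_add_two
    have hpos : 1 ≤ fib (2 * k + 2) := Nat.fib_pos.2 (by omega)
    have hb_prev : b (fib (2 * k + 3) - 1) = fib (2 * k + 2) - 1 := by
      have : goldenFloor (fib (2 * k + 3)) = fib (2 * k + 2) :=
        goldenFloor_fib_succ_of_even heven
      rw [Set.indicator_of_mem (fib_mem_oddIndexFibs k), Pi.one_apply] at hprev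
      omega
    have ha_prev : a (fib (2 * k + 2) - 1) = fib (2 * k + 1) := by
      obtain ⟨ha', -⟩ := ih (fib (2 * k + 2) - 1) (by omega)
      have : goldenFloor (fib (2 * k + 2)) + 1 = fib (2 * k + 1) :=
        goldenFloor_fib_succ_of_odd ⟨k, by ring⟩
      rw [Nat.sub_add_cancel hpos, Set.indicator_of_mem (fib_mem_evenIndexFibs k),
        Pi.one_apply] at ha'
      omega
    have : goldenFloor (fib (2 * k + 3) + 1) = fib (2 * k + 2) :=
      goldenFloor_fib_succ_add_one_of_even heven (by omega)
    rw [Set.indicator_of_notMem (fib_add_one_notMem_oddIndexFibs (by omega) (by omega))]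
    rw [hb_prev, ha_prev] at hrec
    omega
  · rw [Set.indicator_of_notMem hO, add_zero] at hprev
    obtain ⟨haK, -⟩ := ih (goldenFloor n) (goldenFloor_lt_self hn)
    rw [Set.indicator_eq_indicator (goldenFloor_add_one_mem_evenIndexFibs_iff hn) (g := 1) rfl]
      at haK
    have := goldenFloor_add_goldenFloor_goldenFloor_add_one n
    have := one_le_goldenFloor (show 2 ≤ n + 1 by omega)
    have : oddIndexFibs.indicator 1 (n + 1) ≤ 1 := Set.indicator_le_self _ _ _
    rw [hprev, haK] at hrec
    omega

lemma a_eq_goldenFloor_add_indicator (ha : ∀ n, 1 ≤ n → a n = n - b (a (n - 1))) {n : ℕ}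
    (hn : 2 ≤ n) (ih : ∀ m < n, StollFormula a b m) :
    a n = goldenFloor (n + 1) + evenIndexFibs.indicator 1 (n + 1) := by
  have hrec := ha n (by omega)
  obtain ⟨hprev, -⟩ := ih (n - 1) (by omega)
  rw [Nat.sub_add_cancel (by omega : 1 ≤ n)] at hprev
  by_cases hE : n ∈ evenIndexFibs
  · obtain ⟨_ | j, rfl⟩ := hE
    · simp at hn
    rw [show 2 * (j + 1) + 2 = 2 * j + 4 by ring] at *
    have hodd : Odd (2 * j + 3) := ⟨j + 1, by ring⟩
    have hfib : fib (2 * j + 4) = fib (2 * j + 2) + fib (2 * j + 3) := Nat.fib_add_two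
    have ha_prev : a (fib (2 * j + 4) - 1) = fib (2 * j + 3) := by
      have : goldenFloor (fib (2 * j + 4)) + 1 = fib (2 * j + 3) :=
        goldenFloor_fib_succ_of_odd hodd
      have hmem : fib (2 * j + 4) ∈ evenIndexFibs := fib_mem_evenIndexFibs (j + 1)
      rw [Set.indicator_of_mem hmem, Pi.one_apply] at hprev
      omega
    have hb_prev : b (fib (2 * j + 3)) = fib (2 * j + 2) := by
      obtain ⟨-, hb'⟩ := ih (fib (2 * j + 3)) (Nat.fib_lt_fib_succ (by omega))
      have : goldenFloor (fib (2 * j + 3) + 1) = fib (2 * j + 2) :=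
        goldenFloor_fib_succ_add_one_of_even ⟨j + 1, by ring⟩ (by omega)
      rw [Set.indicator_of_notMem (fib_add_one_notMem_oddIndexFibs (by omega) (by omega))] at hb'
      omega
    have : goldenFloor (fib (2 * j + 4) + 1) = fib (2 * j + 3) :=
      goldenFloor_fib_succ_add_one_of_odd hodd
    rw [Set.indicator_of_notMem (fib_add_one_notMem_evenIndexFibs (by omega) (by omega))]
    rw [ha_prev, hb_prev] at hrec
    omega
  · rw [Set.indicator_of_notMem hE, add_zero] at hprev
    obtain ⟨-, hbK⟩ := ih (goldenFloor n) (goldenFloor_lt_self (by omega))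
    rw [Set.indicator_eq_indicator (goldenFloor_add_one_mem_oddIndexFibs_iff (by omega) hE)
      (g := 1) rfl] at hbK
    have := goldenFloor_add_goldenFloor_goldenFloor_add_one n
    rw [hprev] at hrec
    omega

lemma stollFormula_zero (ha0 : a 0 = 1) (hb0 : b 0 = 0) : StollFormula a b 0 := by
  have hG : goldenFloor 1 = 0 := by simpa using goldenFloor_fib_succ_of_odd odd_one
  have hE : 1 ∈ evenIndexFibs := ⟨0, by norm_num⟩
  have hO : 1 ∉ oddIndexFibs := by
    rintro ⟨k, hk⟩
    have : fib 3 ≤ fib (2 * k + 3) := Nat.fib_mono (by omega)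
    norm_num at this
    omega
  simp [StollFormula, Set.indicator_of_mem hE, Set.indicator_of_notMem hO, hG, ha0, hb0]

lemma stollFormula_one (ha0 : a 0 = 1) (hb0 : b 0 = 0)
    (ha : ∀ n, 1 ≤ n → a n = n - b (a (n - 1))) (hb : ∀ n, 1 ≤ n → b n = n - a (b (n - 1))) :
    StollFormula a b 1 := by
  have hb1 : b 1 = 0 := by simp [hb 1 le_rfl, hb0, ha0]
  have ha1 : a 1 = 1 := by simp [ha 1 le_rfl, ha0, hb1]
  have hG : goldenFloor 2 = 1 := by simpa using goldenFloor_fib_succ_add_one_of_odd odd_one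
  have hE : 2 ∉ evenIndexFibs := by simpa using fib_add_one_notMem_evenIndexFibs le_rfl rfl
  have hO : 2 ∈ oddIndexFibs := ⟨0, by norm_num⟩
  simp [StollFormula, Set.indicator_of_notMem hE, Set.indicator_of_mem hO, hG, ha1, hb1]

theorem stollFormula (ha0 : a 0 = 1) (hb0 : b 0 = 0)
    (ha : ∀ n, 1 ≤ n → a n = n - b (a (n - 1))) (hb : ∀ n, 1 ≤ n → b n = n - a (b (n - 1)))
    (n : ℕ) : StollFormula a b n := by
  induction n using Nat.strong_induction_on with
  | _ n ih =>
  match n with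
  | 0 => exact stollFormula_zero ha0 hb0
  | 1 => exact stollFormula_one ha0 hb0 ha hb
  | n + 2 =>
    exact ⟨a_eq_goldenFloor_add_indicator ha (by omega) ih,
      b_add_indicator_eq_goldenFloor hb (by omega) ih⟩

end Married

/-- Stoll's theorem on Hofstadter's married functions: with `a(0) = 1`,
`b(0) = 0`, `a(n) = n − b(a(n−1))` and `b(n) = n − a(b(n−1))` for `n ≥ 1`,
and `γ = (√5−1)/2`, for all `n ≥ 1`: `a(n) = ⌊(n+1)γ⌋` unless
`n = F_{2k} − 1` (`k ≥ 2`), in which case `a(F_{2k} − 1) = ⌊F_{2k}·γ⌋ + 1`;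
and `b(n) = ⌊(n+1)γ⌋` unless `n = F_{2k+1} − 1` (`k ≥ 1`), in which case
`b(F_{2k+1} − 1) = ⌊F_{2k+1}·γ⌋ − 1`. -/
theorem stoll_married_functions
    (γ : ℝ) (hγ : γ = (Real.sqrt 5 - 1) / 2)
    (a b : ℕ → ℕ) (ha0 : a 0 = 1) (hb0 : b 0 = 0)
    (ha : ∀ n : ℕ, 1 ≤ n → a n = n - b (a (n - 1)))
    (hb : ∀ n : ℕ, 1 ≤ n → b n = n - a (b (n - 1))) :
    (∀ n : ℕ, 1 ≤ n → (¬ ∃ k : ℕ, 2 ≤ k ∧ n = Nat.fib (2 * k) - 1) →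
      a n = ⌊((n : ℝ) + 1) * γ⌋₊) ∧
    (∀ k : ℕ, 2 ≤ k →
      a (Nat.fib (2 * k) - 1) = ⌊(Nat.fib (2 * k) : ℝ) * γ⌋₊ + 1) ∧
    (∀ n : ℕ, 1 ≤ n → (¬ ∃ k : ℕ, 1 ≤ k ∧ n = Nat.fib (2 * k + 1) - 1) →
      b n = ⌊((n : ℝ) + 1) * γ⌋₊) ∧
    (∀ k : ℕ, 1 ≤ k →
      b (Nat.fib (2 * k + 1) - 1) = ⌊(Nat.fib (2 * k + 1) : ℝ) * γ⌋₊ - 1) := by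
  have hfloor (x : ℕ) : ⌊(x : ℝ) * γ⌋₊ = goldenFloor x := by
    rw [hγ, show (√5 - 1) / 2 = φ⁻¹ by rw [inv_goldenRatio]; ring, goldenFloor]
  have spec := stollFormula ha0 hb0 ha hb
  refine ⟨fun n hn hne => ?_, fun k hk => ?_, fun n hn hne => ?_, fun k hk => ?_⟩
  · have hE : n + 1 ∉ evenIndexFibs := by
      rintro ⟨k, hk⟩
      rcases Nat.eq_zero_or_pos k with rfl | hk0
      · norm_num at hk; omega
      · exact hne ⟨k + 1, by omega, by rw [show 2 * (k + 1) = 2 * k + 2 by ring]; omega⟩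
    rw [(spec n).1, Set.indicator_of_notMem hE, add_zero, ← Nat.cast_succ, hfloor]
  · obtain ⟨j, rfl⟩ : ∃ j, k = j + 1 := ⟨k - 1, by omega⟩
    have hpos : 1 ≤ fib (2 * (j + 1)) := Nat.fib_pos.2 (by omega)
    have hE : fib (2 * (j + 1)) ∈ evenIndexFibs := fib_mem_evenIndexFibs j
    rw [(spec _).1, Nat.sub_add_cancel hpos, Set.indicator_of_mem hE, hfloor, Pi.one_apply]
  · have hO : n + 1 ∉ oddIndexFibs := fun ⟨k, hk⟩ =>
      hne ⟨k + 1, by omega, by rw [show 2 * (k + 1) + 1 = 2 * k + 3 by ring]; omega⟩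
    rw [← Nat.cast_succ, hfloor, ← (spec n).2, Set.indicator_of_notMem hO, add_zero]
  · obtain ⟨j, rfl⟩ : ∃ j, k = j + 1 := ⟨k - 1, by omega⟩
    have hpos : 1 ≤ fib (2 * (j + 1) + 1) := Nat.fib_pos.2 (by omega)
    have hO : fib (2 * (j + 1) + 1) ∈ oddIndexFibs := fib_mem_oddIndexFibs j
    have := (spec (fib (2 * (j + 1) + 1) - 1)).2
    rw [Nat.sub_add_cancel hpos, Set.indicator_of_mem hO, Pi.one_apply] at this
    rw [hfloor]
    omega
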